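/- Let M be a maximum-cardinality matching in a finite bipartite graph G = (X ⊔ Y, E), let X_0 be the set of vertices of X unmatched by M, and let X_S, X_L, Y_S, Y_L be the partitions of X and Y induced by the maximal M-alternating sequence starting at X_0. Then: (a) there are no edges between X_S and Y_L; (b) the induced subgraph G[X_S, Y_S] is Y-path-saturated; (c) the induced subgraph G[X_L, Y_L] admits a matching saturating X_L (namely the edges of M with both endpoints in X_L ∪ Y_L). -/

import Mathlib

attribute [local instance] Classical.propDecidable

variable {V : Type*}

/-- `X, Y` form a bipartition of the vertex set of the simple graph `G`:
they are disjoint, cover all vertices, and every edge joins `X` to `Y`. -/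
def IsBipartition [Fintype V] (G : SimpleGraph V) (X Y : Finset V) : Prop :=
  Disjoint X Y ∧ X ∪ Y = Finset.univ ∧
    ∀ ⦃u v : V⦄, G.Adj u v → (u ∈ X ∧ v ∈ Y) ∨ (u ∈ Y ∧ v ∈ X)

/-- `M` is a matching of `G` all of whose edges go from `X'` to `Y'`
(i.e. a matching of the induced subgraph `G[X', Y']`), recorded as a set of
pairwise vertex-disjoint adjacent pairs. -/
def IsBipMatching (G : SimpleGraph V) (X' Y' : Finset V) (M : Finset (V × V)) : Prop :=
  (∀ p ∈ M, p.1 ∈ X' ∧ p.2 ∈ Y' ∧ G.Adj p.1 p.2) ∧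
  ∀ p ∈ M, ∀ q ∈ M, p ≠ q → p.1 ≠ q.1 ∧ p.2 ≠ q.2

/-- `M` is envy-free w.r.t. `X`: no unmatched vertex of `X` is adjacent to a
matched vertex on the `Y`-side of `M`. -/
def EnvyFree (G : SimpleGraph V) (X : Finset V) (M : Finset (V × V)) : Prop :=
  ∀ x ∈ X, x ∉ M.image Prod.fst → ∀ y ∈ M.image Prod.snd, ¬ G.Adj x y

/-- The (bipartite) graph `G[X ∪ Y]` is `Y`-path-saturated: for some `k ≥ 1` there are
partitions `X = X_0 ⊔ ⋯ ⊔ X_k` and `Y = Y_1 ⊔ ⋯ ⊔ Y_k` such that for `1 ≤ i ≤ k`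
there is a perfect matching between `X_i` and `Y_i`, and every vertex of `Y_i` is
adjacent to some vertex of `X_{i-1}`. -/
def YPathSaturated (G : SimpleGraph V) (X Y : Finset V) : Prop :=
  ∃ k : ℕ, 1 ≤ k ∧ ∃ A B : ℕ → Finset V,
    (∀ i ∈ Finset.range (k + 1), ∀ j ∈ Finset.range (k + 1), i ≠ j → Disjoint (A i) (A j)) ∧
    (∀ i ∈ Finset.Icc 1 k, ∀ j ∈ Finset.Icc 1 k, i ≠ j → Disjoint (B i) (B j)) ∧
    X = (Finset.range (k + 1)).biUnion A ∧
    Y = (Finset.Icc 1 k).biUnion B ∧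
    (∀ i ∈ Finset.Icc 1 k, ∃ f : V → V,
      Set.BijOn f (A i) (B i) ∧ ∀ x ∈ A i, G.Adj x (f x)) ∧
    (∀ i ∈ Finset.Icc 1 k, ∀ y ∈ B i, ∃ x ∈ A (i - 1), G.Adj x y)

/-- One step of the `M`-alternating sequence. The state is `(X_i, Y_i, Yacc)` where
`Yacc = Y_1 ∪ ⋯ ∪ Y_i`. The next `Y`-level consists of the vertices of `Y` adjacent
along non-matching edges to `X_i` and not used before; the next `X`-level consists of
their `M`-partners. -/
noncomputable def altStep (G : SimpleGraph V) (M : Finset (V × V)) (Y : Finset V)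
    (p : Finset V × Finset V × Finset V) : Finset V × Finset V × Finset V :=
  let Ynext := (Y.filter fun y => ∃ x ∈ p.1, G.Adj x y ∧ (x, y) ∉ M) \ p.2.2
  let Xnext := (M.filter fun q => q.2 ∈ Ynext).image Prod.fst
  (Xnext, Ynext, p.2.2 ∪ Ynext)

/-- The `M`-alternating sequence starting at `X_0` = the set of vertices of `X`
unmatched by `M`. `(altSeq G M X Y i) = (X_i, Y_i, Y_1 ∪ ⋯ ∪ Y_i)`. -/
noncomputable def altSeq (G : SimpleGraph V) (M : Finset (V × V)) (X Y : Finset V) :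
    ℕ → Finset V × Finset V × Finset V
  | 0 => (X \ M.image Prod.fst, ∅, ∅)
  | i + 1 => altStep G M Y (altSeq G M X Y i)

/-!
Because `M` is maximum there is no augmenting path, so every `Y_i` (`i ≥ 1`) is matched: if
`y ∈ Y_i` were free, flipping the alternating path from `X_0` to its neighbour in `X_{i-1}`
and adding that edge would enlarge `M`. Hence `X_i` is exactly the set of partners of `Y_i`,
which gives the perfect matchings in (b). A neighbour of `x ∈ X_i` is the partner of `x` or
lies in some `Y_j` with `j ≤ i + 1`, which gives (a); a vertex of `X_L` is not in `X_0`, hence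
matched, and its partner cannot lie in `Y_S`, which gives (c).
-/

noncomputable def mate (M : Finset (V × V)) (x : V) : V :=
  if h : ∃ y, (x, y) ∈ M then h.choose else x

namespace IsBipMatching

variable {G : SimpleGraph V} {X Y : Finset V} {M N : Finset (V × V)}

lemma eq_of_fst_eq (hM : IsBipMatching G X Y M) {p q : V × V} (hp : p ∈ M) (hq : q ∈ M)
    (h : p.1 = q.1) : p = q := by
  by_contra hne
  exact (hM.2 p hp q hq hne).1 h

lemma eq_of_snd_eq (hM : IsBipMatching G X Y M) {p q : V × V} (hp : p ∈ M) (hq : q ∈ M)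
    (h : p.2 = q.2) : p = q := by
  by_contra hne
  exact (hM.2 p hp q hq hne).2 h

lemma mono (hM : IsBipMatching G X Y M) (hNM : N ⊆ M) : IsBipMatching G X Y N :=
  ⟨fun p hp => hM.1 p (hNM hp), fun p hp q hq => hM.2 p (hNM hp) q (hNM hq)⟩

lemma restrict (hM : IsBipMatching G X Y M) (X' Y' : Finset V) :
    IsBipMatching G X' Y' (M.filter fun p => p.1 ∈ X' ∧ p.2 ∈ Y') := by
  refine ⟨fun p hp => ?_, fun p hp q hq => hM.2 p (Finset.mem_filter.mp hp).1 q
    (Finset.mem_filter.mp hq).1⟩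
  obtain ⟨hpM, hpX', hpY'⟩ := Finset.mem_filter.mp hp
  exact ⟨hpX', hpY', (hM.1 p hpM).2.2⟩

lemma insert_of_notMem (hM : IsBipMatching G X Y M) {x y : V} (hx : x ∈ X) (hy : y ∈ Y)
    (hxy : G.Adj x y) (hxM : x ∉ M.image Prod.fst) (hyM : y ∉ M.image Prod.snd) :
    IsBipMatching G X Y (insert (x, y) M) := by
  have hfresh : ∀ q ∈ M, x ≠ q.1 ∧ y ≠ q.2 := fun q hq =>
    ⟨fun h => hxM (Finset.mem_image.mpr ⟨q, hq, h.symm⟩),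
      fun h => hyM (Finset.mem_image.mpr ⟨q, hq, h.symm⟩)⟩
  refine ⟨fun p hp => ?_, fun p hp q hq hne => ?_⟩
  · rcases Finset.mem_insert.mp hp with rfl | hp
    exacts [⟨hx, hy, hxy⟩, hM.1 p hp]
  rcases Finset.mem_insert.mp hp with rfl | hp <;> rcases Finset.mem_insert.mp hq with rfl | hq
  · exact absurd rfl hne
  · exact hfresh q hq
  · exact (hfresh p hp).imp Ne.symm Ne.symm
  · exact hM.2 p hp q hq hne

lemma exchange (hM : IsBipMatching G X Y M) {x x' y : V} (hxy : (x, y) ∈ M) (hx' : x' ∈ X)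
    (hx'y : G.Adj x' y) (hx'M : x' ∉ M.image Prod.fst) :
    IsBipMatching G X Y (insert (x', y) (M.erase (x, y))) ∧
      (insert (x', y) (M.erase (x, y))).card = M.card ∧
      x ∉ (insert (x', y) (M.erase (x, y))).image Prod.fst := by
  have hx'x : x' ≠ x := fun h => hx'M (Finset.mem_image.mpr ⟨(x, y), hxy, h.symm⟩)
  have hx'erase : x' ∉ (M.erase (x, y)).image Prod.fst := fun h =>
    hx'M (Finset.image_subset_image (Finset.erase_subset _ _) h)
  refine ⟨(hM.mono (Finset.erase_subset _ _)).insert_of_notMem hx' (hM.1 _ hxy).2.1 hx'y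
    hx'erase ?_, ?_, ?_⟩
  · simp only [Finset.mem_image, Finset.mem_erase]
    rintro ⟨q, ⟨hqne, hq⟩, hqy⟩
    exact hqne (hM.eq_of_snd_eq hq hxy hqy)
  · rw [Finset.card_insert_of_notMem fun h => hx'erase (Finset.mem_image_of_mem _ h),
      Finset.card_erase_add_one hxy]
  · simp only [Finset.mem_image, Finset.mem_insert, Finset.mem_erase]
    rintro ⟨q, rfl | ⟨hqne, hq⟩, hqx⟩
    · exact hx'x hqx
    · exact hqne (hM.eq_of_fst_eq hq hxy hqx)

lemma mate_eq (hM : IsBipMatching G X Y M) {x y : V} (hxy : (x, y) ∈ M) : mate M x = y := by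
  have h : ∃ y, (x, y) ∈ M := ⟨y, hxy⟩
  rw [mate, dif_pos h]
  exact congrArg Prod.snd (hM.eq_of_fst_eq h.choose_spec hxy rfl)

end IsBipMatching

section AltSeq

variable (G : SimpleGraph V) (M : Finset (V × V)) (X Y : Finset V)

noncomputable abbrev altX (i : ℕ) : Finset V := (altSeq G M X Y i).1

noncomputable abbrev altY (i : ℕ) : Finset V := (altSeq G M X Y i).2.1

noncomputable abbrev altYUpTo (i : ℕ) : Finset V := (altSeq G M X Y i).2.2

variable {G M X Y}

lemma mem_altX_zero {x : V} : x ∈ altX G M X Y 0 ↔ x ∈ X ∧ x ∉ M.image Prod.fst := by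
  simp only [altX, altSeq, Finset.mem_sdiff]

lemma mem_altX_succ {i : ℕ} {x : V} :
    x ∈ altX G M X Y (i + 1) ↔ ∃ y, (x, y) ∈ M ∧ y ∈ altY G M X Y (i + 1) := by
  simp only [altX, altY, altSeq, altStep, Finset.mem_image, Finset.mem_filter]
  constructor
  · rintro ⟨⟨x, y⟩, ⟨hxy, hy⟩, rfl⟩
    exact ⟨y, hxy, hy⟩
  · rintro ⟨y, hxy, hy⟩
    exact ⟨(x, y), ⟨hxy, hy⟩, rfl⟩

lemma altY_zero : altY G M X Y 0 = ∅ := rfl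

lemma mem_altY_succ {i : ℕ} {y : V} :
    y ∈ altY G M X Y (i + 1) ↔
      (y ∈ Y ∧ ∃ x ∈ altX G M X Y i, G.Adj x y ∧ (x, y) ∉ M) ∧ y ∉ altYUpTo G M X Y i := by
  simp only [altY, altX, altYUpTo, altSeq, altStep, Finset.mem_sdiff, Finset.mem_filter]

lemma altYUpTo_succ (i : ℕ) :
    altYUpTo G M X Y (i + 1) = altYUpTo G M X Y i ∪ altY G M X Y (i + 1) := rfl

lemma mem_altYUpTo {i : ℕ} {y : V} :
    y ∈ altYUpTo G M X Y i ↔ ∃ j ≤ i, y ∈ altY G M X Y j := by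
  induction i with
  | zero => simp [altYUpTo, altY, altSeq]
  | succ i ih =>
    rw [altYUpTo_succ, Finset.mem_union, ih]
    constructor
    · rintro (⟨j, hji, hy⟩ | hy)
      exacts [⟨j, hji.trans i.le_succ, hy⟩, ⟨i + 1, le_rfl, hy⟩]
    · rintro ⟨j, hji, hy⟩
      rcases hji.lt_or_eq with hji | rfl
      exacts [Or.inl ⟨j, Nat.lt_succ_iff.mp hji, hy⟩, Or.inr hy]

lemma altY_subset (i : ℕ) : altY G M X Y i ⊆ Y := by
  intro y hy
  cases i with
  | zero => simp [altY_zero] at hy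
  | succ i => exact (mem_altY_succ.mp hy).1.1

lemma altY_disjoint {i j : ℕ} (hij : i ≠ j) : Disjoint (altY G M X Y i) (altY G M X Y j) := by
  wlog hlt : i < j generalizing i j
  · exact (this hij.symm (by omega)).symm
  obtain ⟨j, rfl⟩ : ∃ j', j = j' + 1 := ⟨j - 1, by omega⟩
  rw [Finset.disjoint_left]
  intro y hyi hyj
  exact (mem_altY_succ.mp hyj).2 (mem_altYUpTo.mpr ⟨i, by omega, hyi⟩)

lemma mem_altX_of_mem_altY {i : ℕ} {x y : V} (hxy : (x, y) ∈ M) (hy : y ∈ altY G M X Y i) :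
    x ∈ altX G M X Y i := by
  cases i with
  | zero => simp [altY_zero] at hy
  | succ i => exact mem_altX_succ.mpr ⟨y, hxy, hy⟩

lemma altX_subset (hM : IsBipMatching G X Y M) (i : ℕ) : altX G M X Y i ⊆ X := by
  intro x hx
  cases i with
  | zero => exact (mem_altX_zero.mp hx).1
  | succ i =>
    obtain ⟨y, hxy, -⟩ := mem_altX_succ.mp hx
    exact (hM.1 _ hxy).1

lemma altX_disjoint (hM : IsBipMatching G X Y M) {i j : ℕ} (hij : i ≠ j) :
    Disjoint (altX G M X Y i) (altX G M X Y j) := by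
  wlog hlt : i < j generalizing i j
  · exact (this hij.symm (by omega)).symm
  obtain ⟨j, rfl⟩ : ∃ j', j = j' + 1 := ⟨j - 1, by omega⟩
  rw [Finset.disjoint_left]
  intro x hxi hxj
  obtain ⟨y, hxy, hyj⟩ := mem_altX_succ.mp hxj
  cases i with
  | zero => exact (mem_altX_zero.mp hxi).2 (Finset.mem_image.mpr ⟨(x, y), hxy, rfl⟩)
  | succ i =>
    obtain ⟨y', hxy', hyi⟩ := mem_altX_succ.mp hxi
    cases hM.eq_of_fst_eq hxy hxy' rfl
    exact Finset.disjoint_left.mp (altY_disjoint hij) hyi hyj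

lemma altY_nonempty_of_succ_succ {i : ℕ} (h : (altY G M X Y (i + 2)).Nonempty) :
    (altY G M X Y (i + 1)).Nonempty := by
  obtain ⟨y, hy⟩ := h
  obtain ⟨x, hx, -⟩ := (mem_altY_succ.mp hy).1.2
  obtain ⟨y', -, hy'⟩ := mem_altX_succ.mp hx
  exact ⟨y', hy'⟩

lemma le_card_altYUpTo {i : ℕ} (h : (altY G M X Y i).Nonempty) :
    i ≤ (altYUpTo G M X Y i).card := by
  induction i with
  | zero => exact Nat.zero_le _
  | succ i ih =>
    have hdisj : Disjoint (altYUpTo G M X Y i) (altY G M X Y (i + 1)) :=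
      Finset.disjoint_right.mpr fun _ hy => (mem_altY_succ.mp hy).2
    rw [altYUpTo_succ, Finset.card_union_of_disjoint hdisj]
    have hpos := Finset.card_pos.mpr h
    cases i with
    | zero => omega
    | succ i => have := ih (altY_nonempty_of_succ_succ h); omega

lemma altY_eq_empty_of_card_lt {i : ℕ} (hi : Y.card < i) : altY G M X Y i = ∅ := by
  by_contra hne
  have hsub : altYUpTo G M X Y i ⊆ Y := fun y hy =>
    let ⟨j, _, hyj⟩ := mem_altYUpTo.mp hy
    altY_subset j hyj
  have := le_card_altYUpTo (Finset.nonempty_iff_ne_empty.mpr hne)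
  have := Finset.card_le_card hsub
  omega

lemma altX_eq_empty_of_card_lt {i : ℕ} (hi : Y.card < i) : altX G M X Y i = ∅ := by
  obtain ⟨i, rfl⟩ : ∃ i', i = i' + 1 := ⟨i - 1, by omega⟩
  refine Finset.eq_empty_of_forall_notMem fun x hx => ?_
  obtain ⟨y, -, hy⟩ := mem_altX_succ.mp hx
  simp [altY_eq_empty_of_card_lt hi] at hy

end AltSeq

section Partition

variable {G : SimpleGraph V} {M : Finset (V × V)} {X Y : Finset V}

/-- The matching obtained by flipping an alternating path from `X_0` to `x`. -/
lemma exists_rematching_of_mem_altX (hM : IsBipMatching G X Y M) (i : ℕ) {x : V}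
    (hx : x ∈ altX G M X Y i) :
    ∃ M' : Finset (V × V), IsBipMatching G X Y M' ∧ M'.card = M.card ∧
      x ∉ M'.image Prod.fst ∧ M'.image Prod.snd ⊆ M.image Prod.snd ∧
      ∀ p ∈ M, p.2 ∉ altYUpTo G M X Y i → p ∈ M' := by
  induction i generalizing x with
  | zero => exact ⟨M, hM, rfl, (mem_altX_zero.mp hx).2, subset_rfl, fun p hp _ => hp⟩
  | succ i ih =>
    obtain ⟨y, hxy, hy⟩ := mem_altX_succ.mp hx
    obtain ⟨⟨-, x', hx', hx'y, -⟩, hyUpTo⟩ := mem_altY_succ.mp hy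
    obtain ⟨M', hM', hcard, hx'M', hsnd, hagree⟩ := ih hx'
    obtain ⟨hN, hNcard, hxN⟩ :=
      hM'.exchange (hagree _ hxy hyUpTo) (altX_subset hM i hx') hx'y hx'M'
    refine ⟨_, hN, hNcard.trans hcard, hxN, ?_, fun p hp hpUpTo => ?_⟩
    · intro z hz
      simp only [Finset.mem_image, Finset.mem_insert, Finset.mem_erase] at hz
      obtain ⟨q, rfl | ⟨-, hq⟩, rfl⟩ := hz
      exacts [Finset.mem_image.mpr ⟨_, hxy, rfl⟩, hsnd (Finset.mem_image_of_mem _ hq)]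
    · rw [altYUpTo_succ, Finset.mem_union, not_or] at hpUpTo
      refine Finset.mem_insert_of_mem (Finset.mem_erase.mpr ⟨?_, hagree p hp hpUpTo.1⟩)
      rintro rfl
      exact hpUpTo.2 hy

/-- Otherwise the flipped path followed by the edge into `Y_i` would be augmenting. -/
lemma altY_subset_image_snd (hM : IsBipMatching G X Y M)
    (hmax : ∀ M' : Finset (V × V), IsBipMatching G X Y M' → M'.card ≤ M.card) (i : ℕ) :
    altY G M X Y i ⊆ M.image Prod.snd := by
  intro y hy
  by_contra hyM
  cases i with
  | zero => simp [altY_zero] at hy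
  | succ i =>
    obtain ⟨⟨hyY, x, hx, hxy, -⟩, -⟩ := mem_altY_succ.mp hy
    obtain ⟨M', hM', hcard, hxM', hsnd, -⟩ := exists_rematching_of_mem_altX hM i hx
    have hbigger := hmax _ (hM'.insert_of_notMem (altX_subset hM i hx) hyY hxy hxM'
      fun h => hyM (hsnd h))
    rw [Finset.card_insert_of_notMem fun h => hxM' (Finset.mem_image_of_mem Prod.fst h),
      hcard] at hbigger
    omega

lemma bijOn_mate_altX_altY (hM : IsBipMatching G X Y M)
    (hmax : ∀ M' : Finset (V × V), IsBipMatching G X Y M' → M'.card ≤ M.card) (i : ℕ) :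
    Set.BijOn (mate M) (altX G M X Y (i + 1)) (altY G M X Y (i + 1)) := by
  refine ⟨fun x hx => ?_, fun x hx x' hx' h => ?_, fun y hy => ?_⟩
  · obtain ⟨y, hxy, hy⟩ := mem_altX_succ.mp hx
    rwa [hM.mate_eq hxy]
  · obtain ⟨y, hxy, -⟩ := mem_altX_succ.mp hx
    obtain ⟨y', hx'y', -⟩ := mem_altX_succ.mp hx'
    rw [hM.mate_eq hxy, hM.mate_eq hx'y'] at h
    subst h
    exact congrArg Prod.fst (hM.eq_of_snd_eq hxy hx'y' rfl)
  · obtain ⟨⟨x, y⟩, hxy, rfl⟩ := Finset.mem_image.mp (altY_subset_image_snd hM hmax _ hy)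
    exact ⟨x, mem_altX_succ.mpr ⟨y, hxy, hy⟩, hM.mate_eq hxy⟩

lemma yPathSaturated_altSeq (hM : IsBipMatching G X Y M)
    (hmax : ∀ M' : Finset (V × V), IsBipMatching G X Y M' → M'.card ≤ M.card) :
    YPathSaturated G (X.filter fun x => ∃ i, x ∈ altX G M X Y i)
      (Y.filter fun y => ∃ i, y ∈ altY G M X Y i) := by
  have hpos {i : ℕ} (hi : i ∈ Finset.Icc 1 (Y.card + 1)) : ∃ i', i = i' + 1 :=
    ⟨i - 1, by have := (Finset.mem_Icc.mp hi).1; omega⟩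
  refine ⟨Y.card + 1, le_add_self, altX G M X Y, altY G M X Y,
    fun i _ j _ hij => altX_disjoint hM hij, fun i _ j _ hij => altY_disjoint hij, ?_, ?_, ?_, ?_⟩
  · ext x
    simp only [Finset.mem_filter, Finset.mem_biUnion, Finset.mem_range]
    constructor
    · rintro ⟨-, i, hx⟩
      refine ⟨i, ?_, hx⟩
      by_contra hi
      simp [altX_eq_empty_of_card_lt (show Y.card < i by omega)] at hx
    · rintro ⟨i, -, hx⟩
      exact ⟨altX_subset hM i hx, i, hx⟩
  · ext y
    simp only [Finset.mem_filter, Finset.mem_biUnion, Finset.mem_Icc]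
    constructor
    · rintro ⟨-, i, hy⟩
      refine ⟨i, ⟨?_, ?_⟩, hy⟩ <;> by_contra hi
      · simp [show i = 0 by omega, altY_zero] at hy
      · simp [altY_eq_empty_of_card_lt (show Y.card < i by omega)] at hy
    · rintro ⟨i, -, hy⟩
      exact ⟨altY_subset i hy, i, hy⟩
  · intro i hi
    obtain ⟨i, rfl⟩ := hpos hi
    refine ⟨mate M, bijOn_mate_altX_altY hM hmax i, fun x hx => ?_⟩
    obtain ⟨y, hxy, -⟩ := mem_altX_succ.mp hx
    rw [hM.mate_eq hxy]
    exact (hM.1 _ hxy).2.2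
  · intro i hi y hy
    obtain ⟨i, rfl⟩ := hpos hi
    obtain ⟨-, x, hx, hxy, -⟩ := (mem_altY_succ.mp hy).1
    exact ⟨x, hx, hxy⟩

lemma exists_mem_altY_of_adj (hM : IsBipMatching G X Y M) {i : ℕ} {x y : V}
    (hx : x ∈ altX G M X Y i) (hy : y ∈ Y) (hxy : G.Adj x y) : ∃ j, y ∈ altY G M X Y j := by
  by_cases hxyM : (x, y) ∈ M
  · cases i with
    | zero => exact absurd (Finset.mem_image_of_mem Prod.fst hxyM) (mem_altX_zero.mp hx).2
    | succ i =>
      obtain ⟨y', hxy', hy'⟩ := mem_altX_succ.mp hx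
      cases hM.eq_of_fst_eq hxyM hxy' rfl
      exact ⟨i + 1, hy'⟩
  by_cases hyUpTo : y ∈ altYUpTo G M X Y i
  · obtain ⟨j, -, hj⟩ := mem_altYUpTo.mp hyUpTo
    exact ⟨j, hj⟩
  · exact ⟨i + 1, mem_altY_succ.mpr ⟨⟨hy, x, hx, hxy, hxyM⟩, hyUpTo⟩⟩

lemma exists_mem_of_forall_notMem_altX {x : V} (hx : x ∈ X) (hxS : ∀ i, x ∉ altX G M X Y i) :
    ∃ y, (x, y) ∈ M ∧ ∀ i, y ∉ altY G M X Y i := by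
  have hxM : x ∈ M.image Prod.fst := by_contra fun h => hxS 0 (mem_altX_zero.mpr ⟨hx, h⟩)
  obtain ⟨⟨x, y⟩, hxy, rfl⟩ := Finset.mem_image.mp hxM
  exact ⟨y, hxy, fun i hy => hxS i (mem_altX_of_mem_altY hxy hy)⟩

end Partition

theorem alternating_sequence_partition
    (G : SimpleGraph V) (X Y : Finset V)
    (M : Finset (V × V)) (hM : IsBipMatching G X Y M)
    (hmax : ∀ M' : Finset (V × V), IsBipMatching G X Y M' → M'.card ≤ M.card)
    (XS YS XL YL : Finset V)
    (hXS : XS = X.filter fun x => ∃ i : ℕ, x ∈ (altSeq G M X Y i).1)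
    (hYS : YS = Y.filter fun y => ∃ i : ℕ, y ∈ (altSeq G M X Y i).2.1)
    (hXL : XL = X \ XS) (hYL : YL = Y \ YS) :
    (∀ x ∈ XS, ∀ y ∈ YL, ¬ G.Adj x y) ∧
    YPathSaturated G XS YS ∧
    (IsBipMatching G XL YL (M.filter fun p => p.1 ∈ XL ∧ p.2 ∈ YL) ∧
      XL ⊆ (M.filter fun p => p.1 ∈ XL ∧ p.2 ∈ YL).image Prod.fst) := by
  subst hXS hYS hXL hYL
  refine ⟨?_, yPathSaturated_altSeq hM hmax, hM.restrict _ _, fun x hx => ?_⟩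
  · intro x hx y hy hxy
    obtain ⟨-, i, hxi⟩ := Finset.mem_filter.mp hx
    obtain ⟨hyY, hyS⟩ := Finset.mem_sdiff.mp hy
    exact hyS (Finset.mem_filter.mpr ⟨hyY, exists_mem_altY_of_adj hM hxi hyY hxy⟩)
  · obtain ⟨hxX, hxS⟩ := Finset.mem_sdiff.mp hx
    obtain ⟨y, hxy, hyS⟩ := exists_mem_of_forall_notMem_altX hxX
      fun i hi => hxS (Finset.mem_filter.mpr ⟨hxX, i, hi⟩)
    have hyL : y ∈ Y \ Y.filter fun y => ∃ i, y ∈ (altSeq G M X Y i).2.1 :=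
      Finset.mem_sdiff.mpr ⟨(hM.1 _ hxy).2.1, fun h => (Finset.mem_filter.mp h).2.elim hyS⟩
    exact Finset.mem_image.mpr ⟨(x, y), Finset.mem_filter.mpr ⟨hxy, hx, hyL⟩, rfl⟩
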